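/- arXiv:1908.04961 — 5 statements merged into one kernel-verified Lean document; each statement's English description precedes it below -/
import Mathlib

section
/- Let h ≠ 0 be real and x > 0 satisfy 2h²x³ = x − 1. Then x > 1, and h²x⁴ − x² + 2x = x²(1 − 3h²x²) = x(3 − x)/2. Consequently the value σ_c² = x²(1 − 3h²x²) of σ² for which x is a double root of P is nonnegative if and only if 1 < x ≤ 3. -/
/-!
Along the double-root condition `2h²x³ = x − 1` the term `h²x⁴` can be eliminated from the
critical charge in two ways, giving `x²(1 − 3h²x²)` and `x(3 − x)/2`. Since `h ≠ 0` and `x > 0`,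
`x − 1 = 2h²x³` is positive, and for positive `x` the second form is nonnegative exactly when
`x ≤ 3`.
-/

section DoubleRoot

variable {K : Type*}

theorem critical_charge_eq_sq_mul [CommRing K] {h x : K} (heq : 2 * h ^ 2 * x ^ 3 = x - 1) :
    h ^ 2 * x ^ 4 - x ^ 2 + 2 * x = x ^ 2 * (1 - 3 * h ^ 2 * x ^ 2) := by
  linear_combination 2 * x * heq

variable [Field K] [LinearOrder K] [IsStrictOrderedRing K] {h x : K}

theorem critical_charge_eq_half_mul (heq : 2 * h ^ 2 * x ^ 3 = x - 1) :
    h ^ 2 * x ^ 4 - x ^ 2 + 2 * x = x * (3 - x) / 2 := by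
  linear_combination x / 2 * heq

theorem one_lt_of_two_mul_sq_mul_pow_three_eq_sub_one (hh : h ≠ 0) (hx : 0 < x)
    (heq : 2 * h ^ 2 * x ^ 3 = x - 1) : 1 < x := by
  have : 0 < 2 * h ^ 2 * x ^ 3 := by positivity
  linarith

theorem mul_three_sub_div_two_nonneg_iff (hx : 0 < x) : 0 ≤ x * (3 - x) / 2 ↔ x ≤ 3 := by
  rw [le_div_iff₀ two_pos, zero_mul, mul_nonneg_iff_of_pos_left hx, sub_nonneg]

end DoubleRoot

/-- At a double-root (extremal horizon) point, i.e. a positive solution of `2h²x³ = x - 1`,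
one has `x > 1`, the critical charge identity
`h²x⁴ - x² + 2x = x²(1 - 3h²x²) = x(3 - x)/2`, and nonnegativity of
`σ_c² = x²(1 - 3h²x²)` exactly for `1 < x ≤ 3`. -/
theorem stmt9 (h x : ℝ) (hh : h ≠ 0) (hx : 0 < x)
    (heq : 2 * h ^ 2 * x ^ 3 = x - 1) :
    1 < x ∧
    h ^ 2 * x ^ 4 - x ^ 2 + 2 * x = x ^ 2 * (1 - 3 * h ^ 2 * x ^ 2) ∧
    h ^ 2 * x ^ 4 - x ^ 2 + 2 * x = x * (3 - x) / 2 ∧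
    (0 ≤ x ^ 2 * (1 - 3 * h ^ 2 * x ^ 2) ↔ (1 < x ∧ x ≤ 3)) := by
  have hx1 := one_lt_of_two_mul_sq_mul_pow_three_eq_sub_one hh hx heq
  have hsq := critical_charge_eq_sq_mul heq
  have hhalf := critical_charge_eq_half_mul heq
  refine ⟨hx1, hsq, hhalf, ?_⟩
  rw [← hsq, hhalf, mul_three_sub_div_two_nonneg_iff hx, and_iff_right hx1]
end

section
/- Let h > 0 and 0 < σ² < 1, and set x_{s−} = 1 − √(1 − σ²) and x_{s+} = 1 + √(1 − σ²). Then P(x) = h²x⁴ − x² + 2x − σ² has at least one root in the open interval (0, x_{s−}), and P(x) > 0 for every x in the closed interval [x_{s−}, x_{s+}]; consequently every positive root of P other than those in (0, x_{s−}) lies in (x_{s+}, ∞). -/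
/-!
`P(x) = h²x⁴ - (x² - 2x + σ²)`, and the quadratic `x² - 2x + σ²` is `≤ 0` between its roots
`x_{s∓}`, so `P > 0` on the closed band. Since `P(0) = -σ² < 0`, the intermediate value theorem
gives a root in `(0, x_{s-})`.
-/

open Set

lemma neg_sq_add_two_mul_sub_nonneg_of_mem_Icc {c s x : ℝ} (hs : s ^ 2 = 1 - c)
    (hx : x ∈ Icc (1 - s) (1 + s)) : 0 ≤ -x ^ 2 + 2 * x - c := by
  have hprod : 0 ≤ (x - (1 - s)) * (1 + s - x) :=
    mul_nonneg (sub_nonneg.mpr hx.1) (sub_nonneg.mpr hx.2)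
  linarith [show (x - (1 - s)) * (1 + s - x) = -x ^ 2 + 2 * x - c by linear_combination hs]

lemma horizon_poly_pos_of_quadratic_nonneg {h c x : ℝ} (hh : h ≠ 0) (hx : x ≠ 0)
    (hq : 0 ≤ -x ^ 2 + 2 * x - c) : 0 < h ^ 2 * x ^ 4 - x ^ 2 + 2 * x - c := by
  have : 0 < h ^ 2 * x ^ 4 := by positivity
  linarith

/-- Undercharged case `0 < σ² < 1`: the horizon polynomial `P(x) = h²x⁴ - x² + 2x - σ²`
has a root below the inner singular radius `x_{s-} = 1 - √(1 - σ²)`, is positive on the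
singular band `[x_{s-}, x_{s+}]` with `x_{s+} = 1 + √(1 - σ²)`, and all other positive
roots lie beyond `x_{s+}`. -/
theorem stmt12 (h σ : ℝ) (hh : 0 < h) (hσ0 : 0 < σ ^ 2) (hσ1 : σ ^ 2 < 1)
    (xsm xsp : ℝ)
    (hxsm : xsm = 1 - Real.sqrt (1 - σ ^ 2))
    (hxsp : xsp = 1 + Real.sqrt (1 - σ ^ 2))
    (P : ℝ → ℝ) (hP : ∀ x, P x = h ^ 2 * x ^ 4 - x ^ 2 + 2 * x - σ ^ 2) :
    (∃ x ∈ Set.Ioo 0 xsm, P x = 0) ∧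
    (∀ x ∈ Set.Icc xsm xsp, 0 < P x) ∧
    (∀ x : ℝ, 0 < x → P x = 0 → x ∉ Set.Ioo (0 : ℝ) xsm → xsp < x) := by
  obtain rfl : P = fun x ↦ h ^ 2 * x ^ 4 - x ^ 2 + 2 * x - σ ^ 2 := funext hP
  set s := Real.sqrt (1 - σ ^ 2)
  have hs : s ^ 2 = 1 - σ ^ 2 := Real.sq_sqrt (by linarith)
  have hs0 : 0 < s := Real.sqrt_pos.mpr (by linarith)
  have hs1 : s < 1 := by nlinarith
  subst hxsm hxsp
  have hband : ∀ x ∈ Icc (1 - s) (1 + s), 0 < h ^ 2 * x ^ 4 - x ^ 2 + 2 * x - σ ^ 2 :=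
    fun x hx ↦ horizon_poly_pos_of_quadratic_nonneg hh.ne' (by linarith [hx.1])
      (neg_sq_add_two_mul_sub_nonneg_of_mem_Icc hs hx)
  refine ⟨?_, hband, ?_⟩
  · have hP0 : h ^ 2 * 0 ^ 4 - 0 ^ 2 + 2 * 0 - σ ^ 2 < 0 := by linarith
    exact intermediate_value_Ioo (by linarith) (by fun_prop)
      ⟨hP0, hband _ ⟨le_rfl, by linarith⟩⟩
  · intro x hx0 hPx hx
    by_contra! hle
    have hxs : 1 - s ≤ x := not_lt.mp fun hlt ↦ hx ⟨hx0, hlt⟩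
    exact (hband x ⟨hxs, hle⟩).ne' hPx
end

section
/- Let m > 0, q real, and N(R) = √(1 − 2m/R + q²/R²), with derivative N′(R) = (m/R² − q²/R³)/N(R) wherever 1 − 2m/R + q²/R² > 0. Let I be a real interval and H, R₋ : I → ℝ be differentiable with R₋(t) > 0 and 1 − 2m/R₋(t) + q²/R₋(t)² > 0 for all t ∈ I, satisfying the horizon equation R₋(t)·H(t) = N(R₋(t)) on I. If H′(t) < 0 and H(t) < N′(R₋(t)) for all t ∈ I, then R₋′(t) = −R₋(t)·H′(t)/(H(t) − N′(R₋(t))) and R₋′(t) < 0 for all t ∈ I; i.e. the inner apparent horizon radius is strictly decreasing in time. -/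
/-!
Differentiating the horizon equation `R₋ H = N(R₋)` along `I` gives
`R₋' H + R₋ H' = N'(R₋) R₋'`, which is linear in `R₋'`. Its coefficient `H - N'(R₋)` is
negative at the inner horizon, and `-R₋ H' > 0` by the null energy condition, so `R₋' < 0`.
-/

open Set

theorem Set.OrdConnected.uniqueDiffOn {I : Set ℝ} (hI : I.OrdConnected)
    (hnt : ∃ a ∈ I, ∃ b ∈ I, a < b) : UniqueDiffOn ℝ I := by
  intro t ht
  obtain ⟨a, ha, b, hb, hab⟩ := hnt
  obtain ⟨c, hc, htc⟩ : ∃ c ∈ I, t ≠ c := by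
    by_cases hta : t = a
    · exact ⟨b, hb, hta ▸ hab.ne⟩
    · exact ⟨a, ha, hta⟩
  exact (uniqueDiffOn_uIcc htc t left_mem_uIcc).mono (hI.uIcc_subset ht hc)

theorem hasDerivAt_lapse_sq (m q : ℝ) {R : ℝ} (hR : R ≠ 0) :
    HasDerivAt (fun r : ℝ => 1 - 2 * m / r + q ^ 2 / r ^ 2)
      (2 * m / R ^ 2 - 2 * q ^ 2 / R ^ 3) R := by
  have h := (((hasDerivAt_inv hR).const_mul (-2 * m)).add
    (((hasDerivAt_pow 2 R).inv (pow_ne_zero 2 hR)).const_mul (q ^ 2))).const_add 1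
  refine (h.congr_deriv ?_).congr_of_eventuallyEq (.of_forall fun r => ?_)
  · field_simp
    ring
  · simp only [Pi.add_apply, Pi.inv_apply]
    ring

theorem hasDerivAt_lapse (m q : ℝ) {R : ℝ} (hR : R ≠ 0)
    (hpos : 0 < 1 - 2 * m / R + q ^ 2 / R ^ 2) :
    HasDerivAt (fun r : ℝ => √(1 - 2 * m / r + q ^ 2 / r ^ 2))
      ((m / R ^ 2 - q ^ 2 / R ^ 3) / √(1 - 2 * m / R + q ^ 2 / R ^ 2)) R := by
  refine ((hasDerivAt_lapse_sq m q hR).sqrt hpos.ne').congr_deriv ?_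
  field_simp

theorem eq_div_and_neg_of_implicit_deriv {R H H' R' N' : ℝ}
    (hderiv : R' * H + R * H' - N' * R' = 0) (hR : 0 < R) (hH' : H' < 0) (hlt : H < N') :
    R' = -R * H' / (H - N') ∧ R' < 0 := by
  have hden : H - N' < 0 := sub_neg.mpr hlt
  have hval : R' = -R * H' / (H - N') := by
    rw [eq_div_iff hden.ne]
    linear_combination hderiv
  exact ⟨hval,
    hval ▸ div_neg_of_pos_of_neg (mul_pos_of_neg_of_neg (neg_neg_of_pos hR) hH') hden⟩

theorem stmt13_general (m q : ℝ)
    (N N' : ℝ → ℝ)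
    (hN : ∀ R, N R = Real.sqrt (1 - 2 * m / R + q ^ 2 / R ^ 2))
    (hN' : ∀ R, N' R = (m / R ^ 2 - q ^ 2 / R ^ 3) / N R)
    (I : Set ℝ) (hI : I.OrdConnected) (hInontriv : ∃ a ∈ I, ∃ b ∈ I, a < b)
    (H Rm H' Rm' : ℝ → ℝ)
    (hHd : ∀ t ∈ I, HasDerivAt H (H' t) t)
    (hRmd : ∀ t ∈ I, HasDerivAt Rm (Rm' t) t)
    (hRmpos : ∀ t ∈ I, 0 < Rm t)
    (hlapse : ∀ t ∈ I, 0 < 1 - 2 * m / Rm t + q ^ 2 / (Rm t) ^ 2)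
    (hhor : ∀ t ∈ I, Rm t * H t = N (Rm t))
    (hH' : ∀ t ∈ I, H' t < 0)
    (hHlt : ∀ t ∈ I, H t < N' (Rm t)) :
    ∀ t ∈ I, Rm' t = -(Rm t) * H' t / (H t - N' (Rm t)) ∧ Rm' t < 0 := by
  intro t ht
  have hNd : HasDerivAt N (N' (Rm t)) (Rm t) := by
    rw [hN', funext hN]
    exact hasDerivAt_lapse m q (hRmpos t ht).ne' (hlapse t ht)
  have hdefect : HasDerivAt (fun s => Rm s * H s - N (Rm s))
      (Rm' t * H t + Rm t * H' t - N' (Rm t) * Rm' t) t :=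
    ((hRmd t ht).mul (hHd t ht)).sub (hNd.comp t (hRmd t ht))
  have hdefect_zero : HasDerivWithinAt (fun s => Rm s * H s - N (Rm s)) 0 I t :=
    (hasDerivWithinAt_const t I 0).congr (fun s hs => by simp [hhor s hs])
      (by simp [hhor t ht])
  exact eq_div_and_neg_of_implicit_deriv
    ((hI.uniqueDiffOn hInontriv t ht).eq_deriv _ hdefect.hasDerivWithinAt hdefect_zero)
    (hRmpos t ht) (hH' t ht) (hHlt t ht)

/-- The inner apparent horizon of the Shah–Vaidya spacetime is strictly decreasing:
if `R₋(t)·H(t) = N(R₋(t))` on an interval `I`, with `H' < 0` (null energy condition)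
and `H < N'(R₋)` on `I`, then `R₋' = -R₋·H'/(H - N'(R₋)) < 0` on `I`. -/
theorem stmt13 (m q : ℝ) (hm : 0 < m)
    (N N' : ℝ → ℝ)
    (hN : ∀ R, N R = Real.sqrt (1 - 2 * m / R + q ^ 2 / R ^ 2))
    (hN' : ∀ R, N' R = (m / R ^ 2 - q ^ 2 / R ^ 3) / N R)
    (I : Set ℝ) (hI : I.OrdConnected) (hInontriv : ∃ a ∈ I, ∃ b ∈ I, a < b)
    (H Rm H' Rm' : ℝ → ℝ)
    (hHd : ∀ t ∈ I, HasDerivAt H (H' t) t)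
    (hRmd : ∀ t ∈ I, HasDerivAt Rm (Rm' t) t)
    (hRmpos : ∀ t ∈ I, 0 < Rm t)
    (hlapse : ∀ t ∈ I, 0 < 1 - 2 * m / Rm t + q ^ 2 / (Rm t) ^ 2)
    (hhor : ∀ t ∈ I, Rm t * H t = N (Rm t))
    (hH' : ∀ t ∈ I, H' t < 0)
    (hHlt : ∀ t ∈ I, H t < N' (Rm t)) :
    ∀ t ∈ I, Rm' t = -(Rm t) * H' t / (H t - N' (Rm t)) ∧ Rm' t < 0 :=
  stmt13_general m q N N' hN hN' I hI hInontriv H Rm H' Rm' hHd hRmd hRmpos hlapse hhor hH' hHlt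
end

section
/- Let μ ≠ 0 be real, I ⊆ ℝ an interval, and V : I → ℝ differentiable with V(φ) > 0 and (V′(φ))² = 3μ⁴·V(φ) for all φ ∈ I. Then there exists a constant c ∈ ℝ such that V(φ) = (3μ⁴/4)·(φ − c)² for all φ ∈ I. -/
/-!
Put `W = √V`. Then `(W')² = (V')² / (4V) = 3μ⁴/4` is a nonzero constant, so `W'` never vanishes
and, by Darboux's theorem, has constant sign on the interval; hence `W'` is a constant `b` with
`b² = 3μ⁴/4`. So `W` is affine with slope `b`, and `V = W² = b² (φ - c)²`.
-/

section DerivOnOrdConnected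

variable {I : Set ℝ} {f f' : ℝ → ℝ}

theorem Set.OrdConnected.eq_of_hasDerivAt_sq_eq (hI : I.OrdConnected)
    (hf : ∀ x ∈ I, HasDerivAt f (f' x) x) {k : ℝ} (hk : k ≠ 0) (hsq : ∀ x ∈ I, f' x ^ 2 = k)
    {x₀ x : ℝ} (hx₀ : x₀ ∈ I) (hx : x ∈ I) : f' x = f' x₀ := by
  have hne : ∀ y ∈ I, f' y ≠ 0 := fun y hy h0 => hk (by rw [← hsq y hy, h0, sq, zero_mul])
  have hsign : f' x + f' x₀ ≠ 0 := by
    rcases hasDerivWithinAt_forall_lt_or_forall_gt_of_forall_ne hI.convex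
      (fun y hy => (hf y hy).hasDerivWithinAt) hne with hneg | hpos
    · linarith [hneg x hx, hneg x₀ hx₀]
    · linarith [hpos x hx, hpos x₀ hx₀]
  have hprod : (f' x - f' x₀) * (f' x + f' x₀) = 0 := by
    linear_combination hsq x hx - hsq x₀ hx₀
  exact sub_eq_zero.1 ((mul_eq_zero.1 hprod).resolve_right hsign)

theorem Set.OrdConnected.eq_add_mul_sub_of_hasDerivAt (hI : I.OrdConnected) {b : ℝ}
    (hf : ∀ x ∈ I, HasDerivAt f b x) {x₀ x : ℝ} (hx₀ : x₀ ∈ I) (hx : x ∈ I) :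
    f x = f x₀ + b * (x - x₀) := by
  have hg : ∀ y ∈ I, HasDerivWithinAt (fun y => f y - b * y) 0 I y := fun y hy => by
    have := ((hf y hy).sub ((hasDerivAt_id' y).const_mul b)).hasDerivWithinAt (s := I)
    rwa [mul_one, sub_self] at this
  have := hI.convex.norm_image_sub_le_of_norm_hasDerivWithin_le hg (fun _ _ => norm_zero.le)
    hx₀ hx
  rw [zero_mul, norm_le_zero_iff] at this
  linear_combination this

end DerivOnOrdConnected

/-- The cuscuton potential equation: any positive differentiable solution of
`(V')² = 3μ⁴V` on an interval is of the form `V(φ) = (3μ⁴/4)(φ - c)²`. -/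
theorem stmt15 (μ : ℝ) (hμ : μ ≠ 0) (I : Set ℝ) (hI : I.OrdConnected)
    (V V' : ℝ → ℝ)
    (hd : ∀ φ ∈ I, HasDerivAt V (V' φ) φ)
    (hpos : ∀ φ ∈ I, 0 < V φ)
    (hode : ∀ φ ∈ I, (V' φ) ^ 2 = 3 * μ ^ 4 * V φ) :
    ∃ c : ℝ, ∀ φ ∈ I, V φ = 3 * μ ^ 4 / 4 * (φ - c) ^ 2 := by
  rcases I.eq_empty_or_nonempty with rfl | ⟨φ₀, hφ₀⟩
  · exact ⟨0, by simp⟩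
  set W' : ℝ → ℝ := fun φ => V' φ / (2 * √(V φ))
  have hW : ∀ φ ∈ I, HasDerivAt (fun φ => √(V φ)) (W' φ) φ := fun φ hφ =>
    (hd φ hφ).sqrt (hpos φ hφ).ne'
  have hW'sq : ∀ φ ∈ I, W' φ ^ 2 = 3 * μ ^ 4 / 4 := fun φ hφ => by
    have hV := hpos φ hφ
    simp only [W', div_pow, mul_pow, Real.sq_sqrt hV.le, hode φ hφ]
    field_simp
    ring
  have hk : 3 * μ ^ 4 / 4 ≠ 0 := by positivity
  have hb : W' φ₀ ≠ 0 := fun h => hk (by rw [← hW'sq φ₀ hφ₀, h, sq, zero_mul])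
  have hlin : ∀ φ ∈ I, √(V φ) = √(V φ₀) + W' φ₀ * (φ - φ₀) := fun φ hφ =>
    hI.eq_add_mul_sub_of_hasDerivAt
      (fun ψ hψ => hI.eq_of_hasDerivAt_sq_eq hW hk hW'sq hφ₀ hψ ▸ hW ψ hψ) hφ₀ hφ
  refine ⟨φ₀ - √(V φ₀) / W' φ₀, fun φ hφ => ?_⟩
  rw [← Real.sq_sqrt (hpos φ hφ).le, hlin φ hφ, ← hW'sq φ₀ hφ₀]
  field_simp
  ring
end

section
/- Let a > 0, r > 0 and m, q ∈ ℝ, and suppose u(r) = a + m/r + (m² − q²)/(4ar²) > 0. Then, with primes denoting d/dr, the identity u″(r) − 2(u′(r))²/u(r) − u′(r)/r + 2q²/(u(r)·r⁴) = 3m/r³ holds. Equivalently, λ(r) = log u(r) satisfies e^{λ}[λ″ − (λ′)² − λ′/r + 2q²e^{−2λ}/r⁴] = 3m/r³. -/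
/-!
Write `u(r) = a + b/r + c/r²`. Clearing the denominator `u`, the equation becomes the identity
`u u'' - 2u'² - u u'/r + 2(b² - 4ac)/r⁴ = 3b u/r³`, which is a polynomial identity in `1/r`:
both sides equal `3ab/r³ + 3b²/r⁴ + 3bc/r⁵` after expansion. So the charge term is governed by the
discriminant of `a r² + b r + c`, and for the Shah–Vaidya profile `b = m`, `c = (m² - q²)/(4a)`
this discriminant is exactly `q²`.
-/

open Filter Topology

noncomputable def quadraticInInv (a b c x : ℝ) : ℝ := a + b / x + c / x ^ 2

theorem hasDerivAt_const_div_pow (k : ℝ) (n : ℕ) {x : ℝ} (hx : x ≠ 0) :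
    HasDerivAt (fun y : ℝ => k / y ^ n) (-(n * k) / x ^ (n + 1)) x := by
  refine ((hasDerivAt_const x k).div (hasDerivAt_pow n x) (pow_ne_zero n hx)).congr_deriv ?_
  rcases n with _ | n
  · simp
  · rw [Nat.add_sub_cancel]
    field_simp
    ring

section QuadraticInInv

variable {a b c x : ℝ}

theorem hasDerivAt_quadraticInInv (hx : x ≠ 0) :
    HasDerivAt (quadraticInInv a b c) (-b / x ^ 2 - 2 * c / x ^ 3) x := by
  refine (((hasDerivAt_const_div_pow b 1 hx).const_add a).add
    (hasDerivAt_const_div_pow c 2 hx)).congr_of_eventuallyEq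
    (Eventually.of_forall fun y => by simp [quadraticInInv]) |>.congr_deriv ?_
  norm_num
  ring

theorem deriv_deriv_quadraticInInv (hx : x ≠ 0) :
    deriv (deriv (quadraticInInv a b c)) x = 2 * b / x ^ 3 + 6 * c / x ^ 4 := by
  have hderiv : deriv (quadraticInInv a b c) =ᶠ[𝓝 x] fun y => -b / y ^ 2 - 2 * c / y ^ 3 := by
    filter_upwards [eventually_ne_nhds hx] with y hy
    exact (hasDerivAt_quadraticInInv hy).deriv
  rw [hderiv.deriv_eq]
  refine HasDerivAt.deriv <| ((hasDerivAt_const_div_pow (-b) 2 hx).sub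
    (hasDerivAt_const_div_pow (2 * c) 3 hx)).congr_deriv ?_
  norm_num
  ring

theorem quadraticInInv_isotropy (hx : x ≠ 0) (hu : quadraticInInv a b c x ≠ 0) :
    deriv (deriv (quadraticInInv a b c)) x
      - 2 * (deriv (quadraticInInv a b c) x) ^ 2 / quadraticInInv a b c x
      - deriv (quadraticInInv a b c) x / x
      + 2 * (b ^ 2 - 4 * a * c) / (quadraticInInv a b c x * x ^ 4) = 3 * b / x ^ 3 := by
  rw [deriv_deriv_quadraticInInv hx, (hasDerivAt_quadraticInInv hx).deriv]
  -- Naming the numerator `p = x² u(x)` lets `field_simp` clear it as an atom.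
  obtain ⟨p, rfl⟩ : ∃ p, c = p - a * x ^ 2 - b * x := ⟨a * x ^ 2 + b * x + c, by ring⟩
  have hux : quadraticInInv a b (p - a * x ^ 2 - b * x) x = p / x ^ 2 := by
    rw [quadraticInInv]
    field_simp
    ring
  have hp : p ≠ 0 := by
    rintro rfl
    exact hu (by rw [hux, zero_div])
  rw [hux]
  field_simp
  ring

end QuadraticInInv

/-- The Shah–Vaidya spatial profile `u(r) = a + m/r + (m² - q²)/(4ar²)` satisfies the
reduced pressure-isotropy equation
`u'' - 2u'²/u - u'/r + 2q²/(u r⁴) = 3m/r³` at every `r > 0` where `u(r) > 0`. -/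
theorem stmt18 (a m q : ℝ) (ha : 0 < a) (r : ℝ) (hr : 0 < r)
    (u : ℝ → ℝ) (hu : ∀ x, u x = a + m / x + (m ^ 2 - q ^ 2) / (4 * a * x ^ 2))
    (hupos : 0 < u r) :
    deriv (deriv u) r - 2 * (deriv u r) ^ 2 / u r - deriv u r / r
      + 2 * q ^ 2 / (u r * r ^ 4) = 3 * m / r ^ 3 := by
  have hu_eq : u = quadraticInInv a m ((m ^ 2 - q ^ 2) / (4 * a)) := by
    ext x
    rw [hu, quadraticInInv, div_div]
  have hdisc : m ^ 2 - 4 * a * ((m ^ 2 - q ^ 2) / (4 * a)) = q ^ 2 := by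
    field_simp
    ring
  subst hu_eq
  simpa only [hdisc] using quadraticInInv_isotropy hr.ne' hupos.ne'
end
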